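/- For the Bingham graph 𝒜 with parameters τ_y ≥ 0 and ν > 0, there is a constant c > 0 and m ≥ 0 (constant) such that S:D ≥ −m + c(|D|² + |S|²) for every (D,S) ∈ 𝒜; i.e., 𝒜 is a 2-graph. -/

import Mathlib

/-- The Frobenius pairing `A : B = Σ_{ij} A_{ij} B_{ij}`. -/
def frob2 {d : ℕ} (A B : Fin d → Fin d → ℝ) : ℝ := ∑ i, ∑ j, A i j * B i j

/-- The Frobenius norm `|A| = (A:A)^{1/2}`. -/
noncomputable def fnorm {d : ℕ} (A : Fin d → Fin d → ℝ) : ℝ := Real.sqrt (frob2 A A)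

/-- The Bingham graph with yield stress `τy ≥ 0` and viscosity `ν > 0`:
`(D,S) ∈ 𝒜` iff (`|S| ≤ τy` and `D = 0`) or (`D ≠ 0` and `S = τy D/|D| + 2ν D`). -/
def binghamGraph {d : ℕ} (τy ν : ℝ) (D S : Fin d → Fin d → ℝ) : Prop :=
  (fnorm S ≤ τy ∧ D = 0) ∨ (D ≠ 0 ∧ S = (τy / fnorm D) • D + (2 * ν) • D)

/-!
On the graph, `S:D ≥ 2ν|D|²` (the yield term contributes `τy|D| ≥ 0`) and
`|S| ≤ τy + 2ν|D|`. Hence `|S|² ≤ 2τy² + 8ν²|D|²`, and with `c = 2ν/(1 + 8ν²)`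
the quantity `c(|D|² + |S|²)` is at most `2ν|D|² + 2cτy² ≤ S:D + 2cτy²`.
-/

section Frobenius

variable {d : ℕ}

lemma frob2_smul_left (a : ℝ) (A B : Fin d → Fin d → ℝ) :
    frob2 (a • A) B = a * frob2 A B := by
  simp only [frob2, Pi.smul_apply, smul_eq_mul, Finset.mul_sum, mul_assoc]

lemma frob2_smul_right (a : ℝ) (A B : Fin d → Fin d → ℝ) :
    frob2 A (a • B) = a * frob2 A B := by
  simp only [frob2, Pi.smul_apply, smul_eq_mul, Finset.mul_sum, mul_left_comm]

lemma frob2_zero_right (A : Fin d → Fin d → ℝ) : frob2 A 0 = 0 := by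
  simp [frob2]

lemma frob2_self_nonneg (A : Fin d → Fin d → ℝ) : 0 ≤ frob2 A A :=
  Finset.sum_nonneg fun i _ => Finset.sum_nonneg fun j _ => mul_self_nonneg (A i j)

lemma frob2_self_eq_zero {A : Fin d → Fin d → ℝ} (h : frob2 A A = 0) : A = 0 := by
  have hrow := (Finset.sum_eq_zero_iff_of_nonneg fun i _ =>
    Finset.sum_nonneg fun j _ => mul_self_nonneg (A i j)).mp h
  funext i j
  have hij := (Finset.sum_eq_zero_iff_of_nonneg fun j _ => mul_self_nonneg (A i j)).mp
    (hrow i (Finset.mem_univ i)) j (Finset.mem_univ j)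
  exact mul_self_eq_zero.mp hij

lemma fnorm_nonneg (A : Fin d → Fin d → ℝ) : 0 ≤ fnorm A := Real.sqrt_nonneg _

lemma fnorm_sq (A : Fin d → Fin d → ℝ) : fnorm A ^ 2 = frob2 A A :=
  Real.sq_sqrt (frob2_self_nonneg A)

lemma fnorm_zero : fnorm (0 : Fin d → Fin d → ℝ) = 0 := by
  simp [fnorm, frob2]

lemma fnorm_pos {A : Fin d → Fin d → ℝ} (h : A ≠ 0) : 0 < fnorm A :=
  Real.sqrt_pos.mpr <| (frob2_self_nonneg A).lt_of_ne fun h0 => h (frob2_self_eq_zero h0.symm)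

lemma fnorm_smul (a : ℝ) (A : Fin d → Fin d → ℝ) : fnorm (a • A) = |a| * fnorm A := by
  rw [fnorm, frob2_smul_left, frob2_smul_right, ← mul_assoc, Real.sqrt_mul (mul_self_nonneg a),
    Real.sqrt_mul_self_eq_abs, fnorm]

end Frobenius

namespace binghamGraph

variable {d : ℕ} {τy ν : ℝ} {D S : Fin d → Fin d → ℝ}

lemma eq_smul (h : binghamGraph τy ν D S) (hD : D ≠ 0) : S = (τy / fnorm D + 2 * ν) • D := by
  rcases h with ⟨-, rfl⟩ | ⟨-, rfl⟩
  · exact absurd rfl hD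
  · rw [add_smul]

lemma two_mul_mul_fnorm_sq_le_frob2 (hτy : 0 ≤ τy) (h : binghamGraph τy ν D S) :
    2 * ν * fnorm D ^ 2 ≤ frob2 S D := by
  by_cases hD : D = 0
  · simp [hD, fnorm_zero, frob2_zero_right]
  rw [h.eq_smul hD, frob2_smul_left, ← fnorm_sq, add_mul]
  have hyield : 0 ≤ τy / fnorm D * fnorm D ^ 2 :=
    mul_nonneg (div_nonneg hτy (fnorm_nonneg D)) (sq_nonneg _)
  linarith

lemma fnorm_le (hτy : 0 ≤ τy) (hν : 0 ≤ ν) (h : binghamGraph τy ν D S) :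
    fnorm S ≤ τy + 2 * ν * fnorm D := by
  by_cases hD : D = 0
  · rcases h with ⟨hS, -⟩ | ⟨hD', -⟩
    · simpa [hD, fnorm_zero] using hS
    · exact absurd hD hD'
  have hn := fnorm_pos hD
  rw [h.eq_smul hD, fnorm_smul, abs_of_nonneg (by positivity), add_mul,
    div_mul_cancel₀ _ hn.ne']

end binghamGraph

lemma exists_coercivity_of_le_add_mul {ν : ℝ} (hν : 0 < ν) (τ : ℝ) :
    ∃ c : ℝ, 0 < c ∧ ∃ m : ℝ, 0 ≤ m ∧ ∀ x y p : ℝ, 0 ≤ y → 2 * ν * x ^ 2 ≤ p →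
      y ≤ τ + 2 * ν * x → -m + c * (x ^ 2 + y ^ 2) ≤ p := by
  set c := 2 * ν / (1 + 8 * ν ^ 2) with hc_def
  have hc : 0 < c := by positivity
  have hc_mul : c * (1 + 8 * ν ^ 2) = 2 * ν := by rw [hc_def]; field_simp
  refine ⟨c, hc, 2 * c * τ ^ 2, by positivity, fun x y p hy hp hyx => ?_⟩
  have hy_sq : y ^ 2 ≤ 2 * τ ^ 2 + 8 * ν ^ 2 * x ^ 2 := by
    nlinarith [pow_le_pow_left₀ hy hyx 2, sq_nonneg (τ - 2 * ν * x)]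
  nlinarith [mul_le_mul_of_nonneg_left hy_sq hc.le]

/-- The Bingham graph is a 2-graph: there are constants `c > 0` and `m ≥ 0` such that
`S:D ≥ −m + c(|D|² + |S|²)` for every `(D,S)` in the graph. -/
theorem stmt_9 {d : ℕ} (τy ν : ℝ) (hτy : 0 ≤ τy) (hν : 0 < ν) :
    ∃ c : ℝ, 0 < c ∧ ∃ m : ℝ, 0 ≤ m ∧
      ∀ D S : Fin d → Fin d → ℝ, binghamGraph τy ν D S →
        -m + c * (fnorm D ^ 2 + fnorm S ^ 2) ≤ frob2 S D := by
  obtain ⟨c, hc, m, hm, hbound⟩ := exists_coercivity_of_le_add_mul hν τy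
  exact ⟨c, hc, m, hm, fun D S h => hbound _ _ _ (fnorm_nonneg S)
    (h.two_mul_mul_fnorm_sq_le_frob2 hτy) (h.fnorm_le hτy hν.le)⟩
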